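/- arXiv:1302.6763 — 3 statements merged into one kernel-verified Lean document; each statement's English description precedes it below -/
import Mathlib

section
/- An integer vector x = (x₁,…,x₆) ∈ ℤ⁶ satisfies χ(x) = 0 if and only if there exist integers a, b with x = a·h₀ + b·h∞. In other words, the radical rad(χ) = {x ∈ ℤ⁶ : χ(x) = 0} equals {a·h₀ + b·h∞ : a, b ∈ ℤ}. -/
/-- The quadratic form of the tubular algebra C(4,λ). -/
def chi (x : Fin 6 → ℚ) : ℚ :=
  (1/2) * (x 0 - x 1)^2 + (x 2 - (1/2) * (x 0 + x 1 + x 3 + x 4))^2 +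
    (1/2) * (x 3 - x 4)^2 + (x 5 + (1/2) * (x 0 + x 1 - x 3 - x 4))^2

def hZero : Fin 6 → ℤ := ![1, 1, 2, 1, 1, 0]

def hInfty : Fin 6 → ℤ := ![0, 0, 1, 1, 1, 1]

/-! `chi` is a sum of squares with positive weights, so it vanishes exactly where each of the
four squared linear forms does; these four linear equations cut out the rank-two lattice spanned
by `hZero` and `hInfty`, parametrised by `x 0` and `x 3 - x 0`. -/

theorem chi_eq_zero_iff (x : Fin 6 → ℚ) :
    chi x = 0 ↔ x 1 = x 0 ∧ x 4 = x 3 ∧ x 2 = x 0 + x 3 ∧ x 5 = x 3 - x 0 := by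
  constructor
  · intro h
    unfold chi at h
    have h₁ := sq_nonneg (x 0 - x 1)
    have h₂ := sq_nonneg (x 2 - (1/2) * (x 0 + x 1 + x 3 + x 4))
    have h₃ := sq_nonneg (x 3 - x 4)
    have h₄ := sq_nonneg (x 5 + (1/2) * (x 0 + x 1 - x 3 - x 4))
    have e₁ : x 0 - x 1 = 0 := pow_eq_zero_iff two_ne_zero |>.mp <| by linarith
    have e₂ : x 2 - (1/2) * (x 0 + x 1 + x 3 + x 4) = 0 :=
      pow_eq_zero_iff two_ne_zero |>.mp <| by linarith
    have e₃ : x 3 - x 4 = 0 := pow_eq_zero_iff two_ne_zero |>.mp <| by linarith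
    have e₄ : x 5 + (1/2) * (x 0 + x 1 - x 3 - x 4) = 0 :=
      pow_eq_zero_iff two_ne_zero |>.mp <| by linarith
    refine ⟨?_, ?_, ?_, ?_⟩ <;> linarith
  · rintro ⟨h₁, h₄, h₂, h₅⟩
    simp only [chi, h₁, h₄, h₂, h₅]
    ring

theorem exists_eq_hZero_hInfty_combination_iff (x : Fin 6 → ℤ) :
    (∃ a b : ℤ, x = fun i => a * hZero i + b * hInfty i) ↔
      x 1 = x 0 ∧ x 4 = x 3 ∧ x 2 = x 0 + x 3 ∧ x 5 = x 3 - x 0 := by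
  constructor
  · rintro ⟨a, b, rfl⟩
    simp [hZero, hInfty]
    omega
  · rintro ⟨h₁, h₄, h₂, h₅⟩
    refine ⟨x 0, x 3 - x 0, funext fun i => ?_⟩
    fin_cases i <;> simp [hZero, hInfty, h₁, h₄, h₂, h₅]
    ring

/-- Lemma 4.1 for C(4,λ): rad(χ) = {a·hZero + b·hInfty : a, b ∈ ℤ}. -/
theorem stmt_2 (x : Fin 6 → ℤ) :
    chi (fun i => (x i : ℚ)) = 0 ↔ ∃ a b : ℤ, x = fun i => a * hZero i + b * hInfty i := by
  rw [chi_eq_zero_iff, exists_eq_hZero_hInfty_combination_iff]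
  norm_cast
end

section
/- Every x ∈ ℤ⁶ with χ(x) = 1 may be written in the form x = a·h₀ + b·h∞ + y with a, b ∈ ℤ and y ∈ Ω, i.e. with y ∈ ℤ⁶ satisfying χ(y) = 1 and y₅ = y₆ = 0. -/
theorem chi_add_hZero_hInfty (x : Fin 6 → ℚ) (a b : ℚ) :
    chi (fun i => x i + a * hZero i + b * hInfty i) = chi x := by
  simp [chi, hZero, hInfty]
  ring

/-- Lemma 4.4 for C(4,λ): every x with χ(x) = 1 is a·hZero + b·hInfty + y with y ∈ Ω. -/
theorem stmt_5 (x : Fin 6 → ℤ) (hx : chi (fun i => (x i : ℚ)) = 1) :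
    ∃ (a b : ℤ) (y : Fin 6 → ℤ), chi (fun i => (y i : ℚ)) = 1 ∧ y 4 = 0 ∧ y 5 = 0 ∧
      x = fun i => a * hZero i + b * hInfty i + y i := by
  set a := x 4 - x 5
  set b := x 5
  refine ⟨a, b, fun i => x i + (-a) * hZero i + (-b) * hInfty i, ?_, ?_, ?_, ?_⟩
  · push_cast
    rw [chi_add_hZero_hInfty, hx]
  · simp [a, b, hZero, hInfty]
  · simp [b, hZero, hInfty]
  · funext i
    ring
end

section
/- Let p and q be positive integers, let r be a positive irrational real number, let k be a natural number and let ε > 0 be real. Then there exist natural numbers a, b with a ≥ 1 such that r − ε < b/a < r and such that for all natural numbers a', b' with a' ≥ 1: if b/a < b'/a' < r then a'·p + b'·q > a·p + b·q + k. -/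
/-!
Take `a ∈ [1, m]` minimising `fract (a * r)`, where `fract (m * r)` is chosen very small, and
`b = ⌊a * r⌋`. A fraction `b' / a'` in `(b / a, r)` satisfies
`0 < a' * r - b' < (a' / a) * fract (a * r)`. For `a' ≤ a` this contradicts the minimality of
`fract (a * r)`; for `a < a' ≤ a + k` it puts `(a' - a) * r` within `fract (a * r)` of an integer,
which is impossible once `fract (a * r)` is smaller than the distances of `r, 2r, …, kr` to `ℤ`.
So `a' > a + k` and `b' > b`.
-/

open Finset Filter Topology

theorem Int.fract_le_sub_of_intCast_le {R : Type*} [Ring R] [LinearOrder R]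
    [IsStrictOrderedRing R] [FloorRing R] {x : R} {z : ℤ} (h : (z : R) ≤ x) :
    Int.fract x ≤ x - z :=
  sub_le_sub_left (Int.cast_le.2 (Int.le_floor.2 h)) x

theorem mul_sub_lt_of_div_lt_div {K : Type*} [Field K] [LinearOrder K] [IsStrictOrderedRing K]
    {a a' b b' r : K} (ha : 0 < a) (ha' : 0 < a')
    (h : b / a < b' / a') : a * (a' * r - b') < a' * (a * r - b) := by
  rw [div_lt_div_iff₀ ha ha'] at h
  linarith

theorem Real.exists_pos_nat_fract_mul_lt (r : ℝ) {δ : ℝ} (hδ : 0 < δ) :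
    ∃ n : ℕ, 0 < n ∧ Int.fract (n * r) < δ := by
  obtain ⟨N, hN⟩ := exists_nat_one_div_lt (lt_min hδ one_pos)
  obtain ⟨k, hk, -, hkr⟩ := Real.exists_nat_abs_mul_sub_round_le r N.succ_pos
  set t := (k : ℝ) * r - round ((k : ℝ) * r)
  have hN' : 1 / ((N.succ : ℝ) + 1) ≤ 1 / ((N : ℝ) + 1) := by gcongr; simp
  obtain ⟨htδ, ht1⟩ := lt_min_iff.1 (hkr.trans_lt (hN'.trans_lt hN))
  rcases le_or_gt 0 t with ht | ht
  · rw [abs_of_nonneg ht] at htδ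
    exact ⟨k, hk, (Int.fract_le_sub_of_intCast_le (by linarith)).trans_lt htδ⟩
  -- `k * r` lies just below an integer, by `x`; `m = ⌊1 / x⌋₊` such steps leave `m * k * r`
  -- just above the integer `m * round (k * r) - 1`.
  set x := -t
  rw [abs_of_neg ht] at htδ ht1
  have hx : 0 < x := neg_pos.2 ht
  set m := ⌊1 / x⌋₊
  have hm : 1 ≤ m := Nat.le_floor (by rw [Nat.cast_one, le_div_iff₀ hx]; linarith)
  have hmx : m * x ≤ 1 := (le_div_iff₀ hx).1 (Nat.floor_le (by positivity))
  have hmx' : 1 < (m + 1) * x := (div_lt_iff₀ hx).1 (Nat.lt_floor_add_one _)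
  refine ⟨m * k, Nat.mul_pos hm hk, ?_⟩
  calc Int.fract (((m * k : ℕ) : ℝ) * r)
      ≤ ((m * k : ℕ) : ℝ) * r - ((m * round ((k : ℝ) * r) - 1 : ℤ) : ℝ) :=
        Int.fract_le_sub_of_intCast_le (by push_cast; nlinarith)
    _ = 1 - m * x := by push_cast; ring
    _ < δ := by linarith

theorem Irrational.exists_pos_le_abs_natCast_mul_sub_intCast {r : ℝ} (hr : Irrational r)
    (L : ℕ) : ∃ c > 0, ∀ d ∈ Icc 1 L, ∀ e : ℤ, c ≤ |(d : ℝ) * r - e| := by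
  have hpos : ∀ d ∈ Icc 1 L, 0 < |(d : ℝ) * r - round ((d : ℝ) * r)| := fun d hd =>
    abs_pos.2 (sub_ne_zero.2 ((hr.natCast_mul (by grind)).ne_int _))
  have hev : ∀ᶠ c in 𝓝[>] (0 : ℝ), ∀ d ∈ Icc 1 L, c < |(d : ℝ) * r - round ((d : ℝ) * r)| :=
    (eventually_all_finset _).2 fun d hd => nhdsWithin_le_nhds (eventually_lt_nhds (hpos d hd))
  obtain ⟨c, hc, hc0⟩ := (hev.and self_mem_nhdsWithin).exists
  exact ⟨c, hc0, fun d hd e => (hc d hd).le.trans (round_le _ e)⟩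

theorem add_lt_of_floor_div_lt_div_lt {r c : ℝ} {a K a' : ℕ} {b' : ℤ} (ha : 0 < a) (hKa : K ≤ a)
    (hmin : ∀ n ∈ Icc 1 a, Int.fract ((a : ℝ) * r) ≤ Int.fract ((n : ℝ) * r))
    (hc : ∀ d ∈ Icc 1 K, ∀ e : ℤ, c ≤ |(d : ℝ) * r - e|) (hac : Int.fract ((a : ℝ) * r) < c)
    (ha' : 0 < a') (h₁ : (⌊(a : ℝ) * r⌋ : ℝ) / a < b' / a') (h₂ : (b' : ℝ) / a' < r) :
    a + K < a' := by
  set x := Int.fract ((a : ℝ) * r)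
  have hax : (a : ℝ) * r - ⌊(a : ℝ) * r⌋ = x := rfl
  have hy : 0 < (a' : ℝ) * r - b' := by
    rw [div_lt_iff₀ (by positivity)] at h₂; linarith
  have hyx : (a : ℝ) * (a' * r - b') < a' * x :=
    hax ▸ mul_sub_lt_of_div_lt_div (by positivity) (by positivity) h₁
  by_contra! hle
  rcases le_or_gt a' a with h | h
  · have hfract : Int.fract ((a' : ℝ) * r) ≤ a' * r - b' :=
      Int.fract_le_sub_of_intCast_le (by linarith)
    have : (a' : ℝ) * x ≤ a * x := by gcongr
    have := hmin a' (mem_Icc.2 ⟨ha', h⟩)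
    nlinarith
  · have hd := hc (a' - a : ℕ) (mem_Icc.2 ⟨by omega, by omega⟩) (b' - ⌊(a : ℝ) * r⌋)
    have hdx : ((a' - a : ℕ) : ℝ) * r - ((b' - ⌊(a : ℝ) * r⌋ : ℤ) : ℝ) = (a' * r - b') - x := by
      rw [Nat.cast_sub h.le, ← hax]; push_cast; ring
    have hda : (a' : ℝ) - a ≤ a := by
      rw [sub_le_iff_le_add]; exact_mod_cast (by omega : a' ≤ a + a)
    have : (a : ℝ) * ((a' * r - b') - x) < a * x := by
      nlinarith [mul_le_mul_of_nonneg_right hda (Int.fract_nonneg ((a : ℝ) * r))]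
    have := lt_of_mul_lt_mul_left this (Nat.cast_nonneg a)
    rw [hdx] at hd
    linarith [abs_lt.2 (⟨by linarith, by linarith⟩ : -c < _ ∧ (a' * r - b') - x < c)]

theorem Irrational.exists_fract_mul_lt_forall_add_lt {r : ℝ} (hr : Irrational r) (K : ℕ)
    {ε : ℝ} (hε : 0 < ε) :
    ∃ a : ℕ, 0 < a ∧ Int.fract ((a : ℝ) * r) < ε ∧ ∀ (a' : ℕ) (b' : ℤ), 0 < a' →
      (⌊(a : ℝ) * r⌋ : ℝ) / a < b' / a' → (b' : ℝ) / a' < r → a + K < a' := by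
  obtain ⟨c, hc, hcK⟩ := hr.exists_pos_le_abs_natCast_mul_sub_intCast K
  obtain ⟨m, hm, hmr⟩ := Real.exists_pos_nat_fract_mul_lt r (lt_min hc hε)
  obtain ⟨a, ha, hamin⟩ :=
    (Icc 1 m).exists_min_image (fun n : ℕ => Int.fract ((n : ℝ) * r)) ⟨m, mem_Icc.2 ⟨hm, le_rfl⟩⟩
  have hac : Int.fract ((a : ℝ) * r) < min c ε := (hamin m (mem_Icc.2 ⟨hm, le_rfl⟩)).trans_lt hmr
  have ha1 : 1 ≤ a := (mem_Icc.1 ha).1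
  have hKa : K ≤ a := by
    by_contra! haK
    have := hcK a (mem_Icc.2 ⟨ha1, haK.le⟩) ⌊(a : ℝ) * r⌋
    rw [Int.self_sub_floor, abs_of_nonneg (Int.fract_nonneg _)] at this
    exact (lt_min_iff.1 hac).1.not_ge this
  refine ⟨a, ha1, (lt_min_iff.1 hac).2, fun a' b' ha' h₁ h₂ => ?_⟩
  exact add_lt_of_floor_div_lt_div_lt ha1 hKa
    (fun n hn => hamin n (mem_Icc.2 ⟨(mem_Icc.1 hn).1, (mem_Icc.1 hn).2.trans (mem_Icc.1 ha).2⟩))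
    hcK (lt_min_iff.1 hac).1 ha' h₁ h₂

/-- Proposition 5.2 (arithmetic form). -/
theorem stmt_9 (p q : ℤ) (hp : 0 < p) (hq : 0 < q) (r : ℝ) (hr : 0 < r)
    (hirr : Irrational r) (k : ℕ) (ε : ℝ) (hε : 0 < ε) :
    ∃ a b : ℕ, 1 ≤ a ∧ r - ε < (b : ℝ) / (a : ℝ) ∧ (b : ℝ) / (a : ℝ) < r ∧
      ∀ a' b' : ℕ, 1 ≤ a' → (b : ℝ) / (a : ℝ) < (b' : ℝ) / (a' : ℝ) →
        (b' : ℝ) / (a' : ℝ) < r →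
        (a' : ℤ) * p + (b' : ℤ) * q > (a : ℤ) * p + (b : ℤ) * q + (k : ℤ) := by
  obtain ⟨a, ha, haε, hgap⟩ := hirr.exists_fract_mul_lt_forall_add_lt k hε
  set b := ⌊(a : ℝ) * r⌋₊
  have hb : (b : ℝ) = ⌊(a : ℝ) * r⌋ := natCast_floor_eq_intCast_floor (by positivity)
  have hba : (b : ℝ) / a = r - Int.fract ((a : ℝ) * r) / a := by
    rw [hb, ← Int.self_sub_floor]; field_simp; ring
  refine ⟨a, b, ha, ?_, ?_, fun a' b' ha' h₁ h₂ => ?_⟩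
  · rw [hba]
    linarith [div_le_self (Int.fract_nonneg ((a : ℝ) * r)) (Nat.one_le_cast.2 ha)]
  · rw [hba]
    exact sub_lt_self r (div_pos (Int.fract_pos.2 ((hirr.natCast_mul (by omega)).ne_int _))
      (by positivity))
  have haa' : a + k < a' :=
    hgap a' b' ha' (by rwa [← hb, Int.cast_natCast]) (by rwa [Int.cast_natCast])
  have hbb' : b < b' := by
    have : (b : ℝ) / a' ≤ b / a := div_le_div_of_nonneg_left (Nat.cast_nonneg _)
      (by positivity) (by exact_mod_cast (by omega : a ≤ a'))
    exact_mod_cast (div_lt_div_iff_of_pos_right (by positivity)).1 (this.trans_lt h₁)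
  have hp' := mul_le_mul_of_nonneg_right (by exact_mod_cast haa' : (a : ℤ) + k + 1 ≤ a') hp.le
  have hq' := mul_le_mul_of_nonneg_right (by exact_mod_cast hbb'.le : (b : ℤ) ≤ b') hq.le
  nlinarith
end
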